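/- Let D be a closed symmetric densely defined operator on a complex Hilbert space H, and let 𝒜 ⊆ B(H) be a *-closed set of bounded operators each of which maps Dom D* into Dom D* and has bounded commutator [D*,a] := D*a − aD* (defined on Dom D*, extended to H). Let A be the C*-subalgebra of B(H) generated by 𝒜, and suppose (u_n) is a sequence in 𝒜 with ‖[D*,u_n]‖ → 0 which is an approximate unit for A in operator norm (‖u_n b − b‖ → 0 and ‖b u_n − b‖ → 0 for all b ∈ A). Then the following are equivalent: (i) (u_n) is an approximate unit for 𝒜 in the Lipschitz norm, i.e. for every a ∈ 𝒜 both ‖[D*, a u_n − a]‖ → 0 and ‖[D*, u_n a − a]‖ → 0; (ii) (u_n) is an approximate unit in operator norm for the C*-subalgebra of B(H) generated by A together with the commutators {[D*,a] : a ∈ 𝒜}. -/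

import Mathlib

/-! On `dom D*` the Leibniz rule gives `[D*, a u - a] = ([D*, a] u - [D*, a]) + a [D*, u]` and
`[D*, u a - a] = (u [D*, a] - [D*, a]) + [D*, u] a`. Since `‖[D*, u_n]‖ → 0`, condition (i) for
`a` says exactly that `u_n` is an approximate unit for the bounded extension of `[D*, a]`. The
elements for which `u_n` is an approximate unit form a subalgebra, closed because `u_n` is bounded:
Banach–Steinhaus bounds left multiplication by `u_n` on `A`, and `‖u_n‖² = ‖u_n u_n*‖` with
`u_n* ∈ A`. -/

open Filter Topology
open scoped Classical

/-- Application of a partially defined operator, with junk value `0` off the domain. -/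
noncomputable def pApply {H : Type*} [NormedAddCommGroup H] [InnerProductSpace ℂ H]
    (D : H →ₗ.[ℂ] H) (x : H) : H :=
  if hm : x ∈ D.domain then D ⟨x, hm⟩ else 0

section ApproxUnit

variable {R : Type*} [NonUnitalNormedRing R]

def IsApproxUnitFor (u : ℕ → R) (b : R) : Prop :=
  Tendsto (fun n => ‖u n * b - b‖) atTop (𝓝 0) ∧ Tendsto (fun n => ‖b * u n - b‖) atTop (𝓝 0)

theorem isApproxUnitFor_iff {u : ℕ → R} {b : R} :
    IsApproxUnitFor u b ↔
      Tendsto (fun n => u n * b) atTop (𝓝 b) ∧ Tendsto (fun n => b * u n) atTop (𝓝 b) :=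
  and_congr tendsto_iff_norm_sub_tendsto_zero.symm tendsto_iff_norm_sub_tendsto_zero.symm

variable (𝕜 : Type*) [NormedField 𝕜] [NormedSpace 𝕜 R] [IsScalarTower 𝕜 R R]
  [SMulCommClass 𝕜 R R]

def approxUnitSubalgebra (u : ℕ → R) : NonUnitalSubalgebra 𝕜 R where
  carrier := {b | IsApproxUnitFor u b}
  zero_mem' := by simp [IsApproxUnitFor]
  add_mem' {x y} hx hy := by
    obtain ⟨hx₁, hx₂⟩ := isApproxUnitFor_iff.1 hx
    obtain ⟨hy₁, hy₂⟩ := isApproxUnitFor_iff.1 hy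
    exact isApproxUnitFor_iff.2 ⟨by simpa only [mul_add] using hx₁.add hy₁,
      by simpa only [add_mul] using hx₂.add hy₂⟩
  mul_mem' {x y} hx hy := by
    obtain ⟨hx₁, -⟩ := isApproxUnitFor_iff.1 hx
    obtain ⟨-, hy₂⟩ := isApproxUnitFor_iff.1 hy
    exact isApproxUnitFor_iff.2 ⟨by simpa only [mul_assoc] using hx₁.mul_const y,
      by simpa only [mul_assoc] using hy₂.const_mul x⟩
  smul_mem' r x hx := by
    obtain ⟨hx₁, hx₂⟩ := isApproxUnitFor_iff.1 hx
    exact isApproxUnitFor_iff.2 ⟨by simpa only [mul_smul_comm] using hx₁.const_smul r,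
      by simpa only [smul_mul_assoc] using hx₂.const_smul r⟩

variable {𝕜}

theorem isClosed_approxUnitSubalgebra {u : ℕ → R} {C : ℝ} (hC : ∀ n, ‖u n‖ ≤ C) :
    IsClosed (approxUnitSubalgebra 𝕜 u : Set R) := by
  have hleft : Equicontinuous fun n (b : R) => u n * b :=
    (LipschitzWith.uniformEquicontinuous _ C.toNNReal fun n =>
      LipschitzWith.of_dist_le' fun x y => by
        rw [dist_eq_norm, dist_eq_norm, ← mul_sub]
        exact (norm_mul_le _ _).trans (by gcongr; exact hC n)).equicontinuous
  have hright : Equicontinuous fun n (b : R) => b * u n :=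
    (LipschitzWith.uniformEquicontinuous _ C.toNNReal fun n =>
      LipschitzWith.of_dist_le' fun x y => by
        rw [dist_eq_norm, dist_eq_norm, ← sub_mul, mul_comm C]
        exact (norm_mul_le _ _).trans (by gcongr; exact hC n)).equicontinuous
  have := (hleft.isClosed_setOfPred_tendsto (l := atTop) continuous_id).inter
    (hright.isClosed_setOfPred_tendsto (l := atTop) continuous_id)
  convert this using 1
  ext b
  exact isApproxUnitFor_iff

end ApproxUnit

theorem exists_norm_le_of_bddAbove_mul {𝕜 R : Type*} [NontriviallyNormedField 𝕜]
    [NonUnitalNormedRing R] [StarRing R] [CStarRing R] [NormedSpace 𝕜 R] [IsScalarTower 𝕜 R R]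
    [SMulCommClass 𝕜 R R] [CompleteSpace R] {E : Submodule 𝕜 R} (hE : IsClosed (E : Set R))
    {u : ℕ → R} (hstar : ∀ n, star (u n) ∈ E)
    (hbdd : ∀ b ∈ E, BddAbove (Set.range fun n => ‖u n * b‖)) :
    ∃ C, ∀ n, ‖u n‖ ≤ C := by
  have : CompleteSpace E := hE.completeSpace_coe
  let mulLeft (n : ℕ) : E →L[𝕜] R := (ContinuousLinearMap.mul 𝕜 R (u n)).comp E.subtypeL
  obtain ⟨C, hC⟩ := banach_steinhaus (g := mulLeft) fun b => by
    obtain ⟨c, hc⟩ := hbdd b b.2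
    exact ⟨c, fun n => hc ⟨n, rfl⟩⟩
  refine ⟨max C 0, fun n => ?_⟩
  have hsq : ‖u n‖ * ‖u n‖ ≤ C * ‖u n‖ :=
    calc ‖u n‖ * ‖u n‖ = ‖mulLeft n ⟨star (u n), hstar n⟩‖ := CStarRing.norm_self_mul_star.symm
      _ ≤ C * ‖star (u n)‖ := (mulLeft n).le_of_opNorm_le (hC n) _
      _ = C * ‖u n‖ := by rw [norm_star]
  by_contra! hlt
  nlinarith [le_max_left C 0, le_max_right C 0]

theorem tendsto_opNorm_zero_of_dense {𝕜 E F : Type*} [NontriviallyNormedField 𝕜]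
    [NormedAddCommGroup E] [NormedSpace 𝕜 E] [NormedAddCommGroup F] [NormedSpace 𝕜 F]
    {V : Set E} (hV : Dense V) {f : ℕ → E →L[𝕜] F} {ε : ℕ → ℝ}
    (hε : Tendsto ε atTop (𝓝 0)) (hf : ∀ n, ∀ x ∈ V, ‖f n x‖ ≤ ε n * ‖x‖) :
    Tendsto (fun n => ‖f n‖) atTop (𝓝 0) := by
  refine squeeze_zero (fun n => norm_nonneg _)
    (fun n => (f n).opNorm_le_bound (le_max_right (ε n) 0) fun x => ?_)
    (by simpa using hε.max (tendsto_const_nhds (x := (0 : ℝ))))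
  have hfV : ∀ y ∈ V, ‖f n y‖ ≤ max (ε n) 0 * ‖y‖ := fun y hy =>
    (hf n y hy).trans (by gcongr; exact le_max_left _ _)
  exact closure_minimal (t := {y | ‖f n y‖ ≤ max (ε n) 0 * ‖y‖}) hfV
    (isClosed_le (by fun_prop) (by fun_prop)) (hV x)

theorem exists_nonneg_of_tendsto_zero_bound {X : Type*} {g : ℕ → X → ℝ} {c : X → ℝ}
    (hc : ∀ x, 0 ≤ c x) (h : ∃ ε : ℕ → ℝ, Tendsto ε atTop (𝓝 0) ∧ ∀ n x, g n x ≤ ε n * c x) :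
    ∃ ε : ℕ → ℝ, Tendsto ε atTop (𝓝 0) ∧ (∀ n, 0 ≤ ε n) ∧ ∀ n x, g n x ≤ ε n * c x := by
  obtain ⟨ε, hε, hg⟩ := h
  refine ⟨fun n => max (ε n) 0, by simpa using hε.max (tendsto_const_nhds (x := (0 : ℝ))),
    fun n => le_max_right _ _, fun n x => (hg n x).trans ?_⟩
  gcongr
  · exact hc x
  · exact le_max_left _ _

section Commutator

variable {H : Type*} [NormedAddCommGroup H] [InnerProductSpace ℂ H] {S : H →ₗ.[ℂ] H}

theorem pApply_of_mem {x : H} (hx : x ∈ S.domain) : pApply S x = S ⟨x, hx⟩ := dif_pos hx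

theorem pApply_sub {x y : H} (hx : x ∈ S.domain) (hy : y ∈ S.domain) :
    pApply S (x - y) = pApply S x - pApply S y := by
  rw [pApply_of_mem (sub_mem hx hy), pApply_of_mem hx, pApply_of_mem hy, ← LinearPMap.map_sub]
  rfl

variable (S) in
/-- `[S, a] := S a - a S` on `dom S`, meaningful when `a` preserves `dom S`. -/
noncomputable def pComm (a : H →L[ℂ] H) (h : S.domain) : H := pApply S (a h) - a (S h)

variable {a v T : H →L[ℂ] H}

theorem pComm_mul_sub_self_right (hT : ∀ h : S.domain, T h = pComm S a h)
    (ha : ∀ x ∈ S.domain, a x ∈ S.domain) (hv : ∀ x ∈ S.domain, v x ∈ S.domain) (h : S.domain) :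
    pComm S (a * v - a) h = (T * v - T) h + a (pComm S v h) := by
  have hTv : T (v h) = pApply S (a (v h)) - a (S ⟨v h, hv h h.2⟩) := hT ⟨v h, hv h h.2⟩
  simp only [pComm, sub_apply, mul_apply_eq_comp, map_sub, hT, hTv,
    pApply_sub (ha _ (hv h h.2)) (ha h h.2), pApply_of_mem (hv h h.2)]
  abel

theorem pComm_mul_sub_self_left (hT : ∀ h : S.domain, T h = pComm S a h)
    (ha : ∀ x ∈ S.domain, a x ∈ S.domain) (hv : ∀ x ∈ S.domain, v x ∈ S.domain) (h : S.domain) :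
    pComm S (v * a - a) h = (v * T - T) h + pComm S v ⟨a h, ha h h.2⟩ := by
  simp only [pComm, sub_apply, mul_apply_eq_comp, map_sub,
    pApply_sub (hv _ (ha h h.2)) (ha h h.2), pApply_of_mem (ha h h.2), hT]
  abel

theorem exists_clm_eq_pComm [CompleteSpace H] (hV : Dense (S.domain : Set H))
    (ha : ∀ x ∈ S.domain, a x ∈ S.domain)
    (hbdd : ∃ M : ℝ, ∀ h : S.domain, ‖pComm S a h‖ ≤ M * ‖(h : H)‖) :
    ∃ T : H →L[ℂ] H, ∀ h : S.domain, T h = pComm S a h := by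
  let aRestrict : S.domain →ₗ[ℂ] S.domain :=
    LinearMap.codRestrict S.domain ((a : H →ₗ[ℂ] H).comp S.domain.subtype) fun h => ha h h.2
  let comm : S.domain →ₗ[ℂ] H := S.toFun.comp aRestrict - (a : H →ₗ[ℂ] H).comp S.toFun
  have hcomm : ∀ h, comm h = pComm S a h := fun h => by
    simp only [comm, pComm, pApply_of_mem (ha h h.2)]
    rfl
  have hdense : DenseRange S.domain.subtype := by simpa [DenseRange] using hV
  simp only [← hcomm] at hbdd ⊢
  exact ⟨comm.extendOfNorm S.domain.subtype, LinearMap.extendOfNorm_eq hdense hbdd⟩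

variable {ε : ℕ → ℝ} {u : ℕ → H →L[ℂ] H} (hT : ∀ h : S.domain, T h = pComm S a h)
  (ha : ∀ x ∈ S.domain, a x ∈ S.domain) (hu : ∀ n, ∀ x ∈ S.domain, u n x ∈ S.domain)
  (hε : Tendsto ε atTop (𝓝 0)) (hε₀ : ∀ n, 0 ≤ ε n)
  (hεu : ∀ n, ∀ h : S.domain, ‖pComm S (u n) h‖ ≤ ε n * ‖(h : H)‖)
include hT ha hu hε hε₀ hεu

theorem exists_tendsto_pComm_of_isApproxUnitFor (hTu : IsApproxUnitFor u T) :
    ∃ δ : ℕ → ℝ, Tendsto δ atTop (𝓝 0) ∧ ∀ n, ∀ h : S.domain,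
      ‖pComm S (a * u n - a) h‖ ≤ δ n * ‖(h : H)‖ ∧
      ‖pComm S (u n * a - a) h‖ ≤ δ n * ‖(h : H)‖ := by
  refine ⟨fun n => ‖u n * T - T‖ + ‖T * u n - T‖ + ε n * ‖a‖,
    by simpa using (hTu.1.add hTu.2).add (hε.mul_const ‖a‖), fun n h => ⟨?_, ?_⟩⟩
  · rw [pComm_mul_sub_self_right hT ha (hu n) h]
    have hcomm : ‖a (pComm S (u n) h)‖ ≤ ε n * ‖a‖ * ‖(h : H)‖ :=
      (a.le_opNorm_of_le (hεu n h)).trans_eq (by ring)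
    have := mul_nonneg (norm_nonneg (u n * T - T)) (norm_nonneg (h : H))
    linarith [norm_add_le_of_le ((T * u n - T).le_opNorm h) hcomm]
  · rw [pComm_mul_sub_self_left hT ha (hu n) h]
    have hcomm : ‖pComm S (u n) ⟨a h, ha h h.2⟩‖ ≤ ε n * ‖a‖ * ‖(h : H)‖ :=
      (hεu n _).trans (by rw [mul_assoc]; gcongr; exacts [hε₀ n, a.le_opNorm h])
    have := mul_nonneg (norm_nonneg (T * u n - T)) (norm_nonneg (h : H))
    linarith [norm_add_le_of_le ((u n * T - T).le_opNorm h) hcomm]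

theorem isApproxUnitFor_of_tendsto_pComm (hV : Dense (S.domain : Set H))
    (hδ : ∃ δ : ℕ → ℝ, Tendsto δ atTop (𝓝 0) ∧ ∀ n, ∀ h : S.domain,
      ‖pComm S (a * u n - a) h‖ ≤ δ n * ‖(h : H)‖ ∧
      ‖pComm S (u n * a - a) h‖ ≤ δ n * ‖(h : H)‖) :
    IsApproxUnitFor u T := by
  obtain ⟨δ, hδ, hδb⟩ := hδ
  have hlim : Tendsto (fun n => δ n + ε n * ‖a‖) atTop (𝓝 0) := by
    simpa using hδ.add (hε.mul_const ‖a‖)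
  constructor
  · refine tendsto_opNorm_zero_of_dense hV hlim fun n x hx => ?_
    have hrw := pComm_mul_sub_self_left hT ha (hu n) ⟨x, hx⟩
    have hcomm : ‖pComm S (u n) ⟨a x, ha x hx⟩‖ ≤ ε n * ‖a‖ * ‖x‖ :=
      (hεu n _).trans (by rw [mul_assoc]; gcongr; exacts [hε₀ n, a.le_opNorm x])
    rw [eq_sub_of_add_eq hrw.symm]
    linarith [norm_sub_le_of_le (hδb n ⟨x, hx⟩).2 hcomm]
  · refine tendsto_opNorm_zero_of_dense hV hlim fun n x hx => ?_
    have hrw := pComm_mul_sub_self_right hT ha (hu n) ⟨x, hx⟩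
    have hcomm : ‖a (pComm S (u n) ⟨x, hx⟩)‖ ≤ ε n * ‖a‖ * ‖x‖ :=
      (a.le_opNorm_of_le (hεu n _)).trans_eq (by ring)
    rw [eq_sub_of_add_eq hrw.symm]
    linarith [norm_sub_le_of_le (hδb n ⟨x, hx⟩).1 hcomm]

end Commutator

theorem statement11_general
    {H : Type*} [NormedAddCommGroup H] [InnerProductSpace ℂ H] [CompleteSpace H]
    -- D closed, symmetric, densely defined
    (D : H →ₗ.[ℂ] H) (hdense : Dense (D.domain : Set H))
    (hsym : D ≤ D.adjoint)
    -- the *-closed set 𝒜 of bounded operators preserving Dom D*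
    (𝒜 : Set (H →L[ℂ] H))
    (hstar : ∀ a ∈ 𝒜, ContinuousLinearMap.adjoint a ∈ 𝒜)
    (hmap : ∀ a ∈ 𝒜, ∀ h ∈ D.adjoint.domain, a h ∈ D.adjoint.domain)
    (hbddcomm : ∀ a ∈ 𝒜, ∃ M : ℝ, ∀ h : D.adjoint.domain,
      ‖pApply D.adjoint (a h) - a (D.adjoint h)‖ ≤ M * ‖(h : H)‖)
    -- the sequence (u_n) in 𝒜 with ‖[D*,u_n]‖ → 0
    (u : ℕ → H →L[ℂ] H) (hu : ∀ n, u n ∈ 𝒜)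
    (hucomm : ∃ ε : ℕ → ℝ, Tendsto ε atTop (𝓝 0) ∧ ∀ n, ∀ h : D.adjoint.domain,
      ‖pApply D.adjoint (u n (h : H)) - u n (D.adjoint h)‖ ≤ ε n * ‖(h : H)‖)
    -- (u_n) is an operator-norm approximate unit for A = C*(𝒜)
    (huA : ∀ b ∈ (NonUnitalAlgebra.adjoin ℂ 𝒜).topologicalClosure,
      Tendsto (fun n => ‖u n * b - b‖) atTop (𝓝 0) ∧
      Tendsto (fun n => ‖b * u n - b‖) atTop (𝓝 0)) :
    -- (i) ↔ (ii)
    ((∀ a ∈ 𝒜, ∃ ε : ℕ → ℝ, Tendsto ε atTop (𝓝 0) ∧ ∀ n, ∀ h : D.adjoint.domain,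
        ‖pApply D.adjoint ((a * u n - a) (h : H)) - (a * u n - a) (D.adjoint h)‖
          ≤ ε n * ‖(h : H)‖ ∧
        ‖pApply D.adjoint ((u n * a - a) (h : H)) - (u n * a - a) (D.adjoint h)‖
          ≤ ε n * ‖(h : H)‖)
      ↔
      (∀ b ∈ (NonUnitalAlgebra.adjoin ℂ
          (𝒜 ∪ {T : H →L[ℂ] H | ∃ a ∈ 𝒜, ∀ h : D.adjoint.domain,
            T (h : H) = pApply D.adjoint (a h) - a (D.adjoint h)})).topologicalClosure,
        Tendsto (fun n => ‖u n * b - b‖) atTop (𝓝 0) ∧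
        Tendsto (fun n => ‖b * u n - b‖) atTop (𝓝 0))) := by
  have hV : Dense (D.adjoint.domain : Set H) := hdense.mono hsym.1
  obtain ⟨ε, hε, hε₀, hεu⟩ :=
    exists_nonneg_of_tendsto_zero_bound (g := fun n h => ‖pComm D.adjoint (u n) h‖)
      (fun h => norm_nonneg (h : H)) hucomm
  have hu' : ∀ n, ∀ x ∈ D.adjoint.domain, u n x ∈ D.adjoint.domain := fun n => hmap _ (hu n)
  constructor
  · intro hi b hb
    obtain ⟨C, hC⟩ := exists_norm_le_of_bddAbove_mul
      (E := (NonUnitalAlgebra.adjoin ℂ 𝒜).topologicalClosure.toSubmodule)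
      (NonUnitalSubalgebra.isClosed_topologicalClosure _)
      (fun n => subset_closure (NonUnitalAlgebra.subset_adjoin ℂ (hstar _ (hu n))))
      (fun b hb => (isApproxUnitFor_iff.1 (huA b hb)).1.norm.bddAbove_range)
    refine NonUnitalSubalgebra.topologicalClosure_minimal (t := approxUnitSubalgebra ℂ u)
      (NonUnitalAlgebra.adjoin_le ?_) (isClosed_approxUnitSubalgebra hC) hb
    rintro x (hx | ⟨a, ha, hT⟩)
    · exact huA x (subset_closure (NonUnitalAlgebra.subset_adjoin ℂ hx))
    · exact isApproxUnitFor_of_tendsto_pComm hT (hmap a ha) hu' hε hε₀ hεu hV (hi a ha)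
  · intro hii a ha
    obtain ⟨T, hT⟩ := exists_clm_eq_pComm hV (hmap a ha) (hbddcomm a ha)
    exact exists_tendsto_pComm_of_isApproxUnitFor hT (hmap a ha) hu' hε hε₀ hεu
      (hii T (subset_closure (NonUnitalAlgebra.subset_adjoin ℂ (Or.inr ⟨a, ha, hT⟩))))

/-- Let `D` be a closed symmetric densely defined operator on a complex
Hilbert space `H` and `𝒜 ⊆ B(H)` a *-closed set of bounded operators, each preserving
`Dom D*` and having bounded commutator `[D*,a] := D*a − aD*`.  Let `A` be the
C*-subalgebra generated by `𝒜` and suppose `(u_n)` is a sequence in `𝒜` with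
`‖[D*,u_n]‖ → 0` which is an operator-norm approximate unit for `A`.  Then (i) `(u_n)` is
an approximate unit for `𝒜` in the Lipschitz norm iff (ii) `(u_n)` is an operator-norm
approximate unit for the C*-subalgebra generated by `A` together with the commutators
`{[D*,a] : a ∈ 𝒜}`. -/
theorem statement11
    {H : Type*} [NormedAddCommGroup H] [InnerProductSpace ℂ H] [CompleteSpace H]
    -- D closed, symmetric, densely defined
    (D : H →ₗ.[ℂ] H) (hdense : Dense (D.domain : Set H))
    (hclosed : D.IsClosed) (hsym : D ≤ D.adjoint)
    -- the *-closed set 𝒜 of bounded operators preserving Dom D*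
    (𝒜 : Set (H →L[ℂ] H))
    (hstar : ∀ a ∈ 𝒜, ContinuousLinearMap.adjoint a ∈ 𝒜)
    (hmap : ∀ a ∈ 𝒜, ∀ h ∈ D.adjoint.domain, a h ∈ D.adjoint.domain)
    (hbddcomm : ∀ a ∈ 𝒜, ∃ M : ℝ, ∀ h : D.adjoint.domain,
      ‖pApply D.adjoint (a h) - a (D.adjoint h)‖ ≤ M * ‖(h : H)‖)
    -- the sequence (u_n) in 𝒜 with ‖[D*,u_n]‖ → 0
    (u : ℕ → H →L[ℂ] H) (hu : ∀ n, u n ∈ 𝒜)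
    (hucomm : ∃ ε : ℕ → ℝ, Tendsto ε atTop (𝓝 0) ∧ ∀ n, ∀ h : D.adjoint.domain,
      ‖pApply D.adjoint (u n (h : H)) - u n (D.adjoint h)‖ ≤ ε n * ‖(h : H)‖)
    -- (u_n) is an operator-norm approximate unit for A = C*(𝒜)
    (huA : ∀ b ∈ (NonUnitalAlgebra.adjoin ℂ 𝒜).topologicalClosure,
      Tendsto (fun n => ‖u n * b - b‖) atTop (𝓝 0) ∧
      Tendsto (fun n => ‖b * u n - b‖) atTop (𝓝 0)) :
    -- (i) ↔ (ii)
    ((∀ a ∈ 𝒜, ∃ ε : ℕ → ℝ, Tendsto ε atTop (𝓝 0) ∧ ∀ n, ∀ h : D.adjoint.domain,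
        ‖pApply D.adjoint ((a * u n - a) (h : H)) - (a * u n - a) (D.adjoint h)‖
          ≤ ε n * ‖(h : H)‖ ∧
        ‖pApply D.adjoint ((u n * a - a) (h : H)) - (u n * a - a) (D.adjoint h)‖
          ≤ ε n * ‖(h : H)‖)
      ↔
      (∀ b ∈ (NonUnitalAlgebra.adjoin ℂ
          (𝒜 ∪ {T : H →L[ℂ] H | ∃ a ∈ 𝒜, ∀ h : D.adjoint.domain,
            T (h : H) = pApply D.adjoint (a h) - a (D.adjoint h)})).topologicalClosure,
        Tendsto (fun n => ‖u n * b - b‖) atTop (𝓝 0) ∧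
        Tendsto (fun n => ‖b * u n - b‖) atTop (𝓝 0))) :=
  statement11_general D hdense hsym 𝒜 hstar hmap hbddcomm u hu hucomm huA
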